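/- Let G be a directed graph and M_u : ↑↑ → Ĉ(↑↑) the representation with M_u(0) a single arrow p₀ → p₁ and M_u(1) the graph q₀ → q₁ ← q₂ with m₀·a = b₀, m₁·a = b₁. Then for arcs x, y of G, φ₁^{M_u,G}(x) = φ₁^{M_u,G}(y) if and only if there is an undirected path between x and y in G, i.e., x and y lie in the same weakly connected component. -/

import Mathlib

/-!
The interface `Int_{M_u}(1)` is the pullback of `M_u(m₀)` and `M_u(m₁)`. These two maps agree
only on the node `p₁ ↦ q₁` (they send the arc `a` to `b₀ ≠ b₁`), so the interface is a single
node lying over `q₁`, and `φ₁(x)` is the node `[(x, q₁)]` of `G ⊗ M_u`.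

In `G ⊗ M_u` the node `(e, q₁)` is glued to `(s e, p₁)` and `(t e, p₁)`, so arcs sharing an
endpoint have the same image. Conversely, labelling `(e, q₁)` by the weak component of `e`,
`(n, p₁)` by the weak component of any arc at `n`, and every other node by `∅`, is compatible with
all the gluings, hence defines a map out of the nodes of `G ⊗ M_u` separating distinct components.
-/

open CategoryTheory Limits Opposite WalkingParallelPair WalkingParallelPairHom

universe v w

section Machinery

variable {C : Type} [SmallCategory C] {D : Type w} [Category.{v} D]

/-- The diagram `Elts(G) → C → D` whose colimit is `G ⊗ M`. -/
def elemDiagram (M : C ⥤ D) (G : Cᵒᵖ ⥤ Type) : G.Elementsᵒᵖ ⥤ D :=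
  (CategoryOfElements.π G).leftOp ⋙ M

/-- `G ⊗ M`, the left Kan extension of `M` along Yoneda evaluated at `G`, computed as the
colimit of `M` over the category of elements of `G`. -/
noncomputable def tensorObj (M : C ⥤ D) (G : Cᵒᵖ ⥤ Type)
    [HasColimitsOfShape G.Elementsᵒᵖ D] : D :=
  colimit (elemDiagram M G)

/-- The colimit injection `μ^{M,G}_{(c,x)} : M(c) ⟶ G ⊗ M`. -/
noncomputable def tensorι (M : C ⥤ D) (G : Cᵒᵖ ⥤ Type)
    [HasColimitsOfShape G.Elementsᵒᵖ D] (c : C) (x : G.obj (op c)) :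
    M.obj c ⟶ tensorObj M G :=
  colimit.ι (elemDiagram M G) (op ⟨op c, x⟩)

/-- The diagram `Elts(y(c)) ≅ Over c → C → D` whose limit is the interface `Int_M(c)`. -/
def overDiagram (M : C ⥤ D) (c : C) : Over c ⥤ D :=
  Over.forget c ⋙ M

/-- The interface `Int_M(c)` of a representation `M` at `c`. -/
noncomputable def interfaceObj (M : C ⥤ D) [∀ c : C, HasLimitsOfShape (Over c) D] (c : C) : D :=
  limit (overDiagram M c)

/-- The limit projection `ν^{M,c}_{(c',f)} : Int_M(c) ⟶ M(c')`. -/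
noncomputable def interfaceπ (M : C ⥤ D) [∀ c : C, HasLimitsOfShape (Over c) D]
    {c' c : C} (f : c' ⟶ c) : interfaceObj M c ⟶ M.obj c' :=
  limit.π (overDiagram M c) (Over.mk f)

/-- The interface transformation `φ^{M,G}_c : G(c) → Hom_D(Int_M(c), G ⊗ M)`,
`x ↦ μ^{M,G}_{(c,x)} ∘ ν^{M,c}_{(c,id_c)}`. -/
noncomputable def interfaceTrans (M : C ⥤ D) (G : Cᵒᵖ ⥤ Type)
    [HasColimitsOfShape G.Elementsᵒᵖ D] [∀ c : C, HasLimitsOfShape (Over c) D]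
    (c : C) (x : G.obj (op c)) : interfaceObj M c ⟶ tensorObj M G :=
  interfaceπ M (𝟙 c) ≫ tensorι M G c x

end Machinery

section DirectedGraphs

/-- Arcs of a directed graph `G`, presented as a presheaf on the walking parallel pair. -/
abbrev arcs (G : WalkingParallelPairᵒᵖ ⥤ Type) : Type := G.obj (op one)

/-- Nodes of the directed graph `G`. -/
abbrev nodes (G : WalkingParallelPairᵒᵖ ⥤ Type) : Type := G.obj (op zero)

/-- The source map of `G`. -/
abbrev srcMap (G : WalkingParallelPairᵒᵖ ⥤ Type) : arcs G → nodes G :=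
  G.map (Quiver.Hom.op left)

/-- The target map of `G`. -/
abbrev tgtMap (G : WalkingParallelPairᵒᵖ ⥤ Type) : arcs G → nodes G :=
  G.map (Quiver.Hom.op right)

/-- The presheaf on `↑↑` (i.e. the directed graph) determined by source/target maps. -/
def dgPresheaf {A N : Type} (s t : A → N) : WalkingParallelPairᵒᵖ ⥤ Type :=
  walkingParallelPairOpEquiv.inverse ⋙ parallelPair (TypeCat.ofHom s) (TypeCat.ofHom t)

/-- A homomorphism of directed graphs, as a morphism of the associated presheaves. -/
def dgHom {A N A' N' : Type} (s t : A → N) (s' t' : A' → N')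
    (α : A → A') (ν : N → N') (hs : ∀ a, s' (α a) = ν (s a)) (ht : ∀ a, t' (α a) = ν (t a)) :
    dgPresheaf s t ⟶ dgPresheaf s' t' :=
  Functor.whiskerLeft walkingParallelPairOpEquiv.inverse
    (parallelPairHom (C := Type) (TypeCat.ofHom s) (TypeCat.ofHom t) (TypeCat.ofHom s')
      (TypeCat.ofHom t') (TypeCat.ofHom α) (TypeCat.ofHom ν)
      (by ext a; exact (hs a).symm) (by ext a; exact (ht a).symm))

end DirectedGraphs

/-- The representation `M_u` of `↑↑`: `M_u(0)` is the single-arrow graph `p₀ → p₁`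
(nodes `Bool`), `M_u(1)` is the graph `q₀ → q₁ ← q₂` (arcs `Bool`, `false = b₀`, `true = b₁`;
nodes `Fin 3`, `0 = q₀, 1 = q₁, 2 = q₂`), with `M_u(m₀) : a ↦ b₀` and `M_u(m₁) : a ↦ b₁`. -/
def Mu : WalkingParallelPair ⥤ (WalkingParallelPairᵒᵖ ⥤ Type) :=
  parallelPair
    (dgHom (fun _ : PUnit => false) (fun _ => true)
      (fun b : Bool => if b then (2 : Fin 3) else 0) (fun _ => 1)
      (fun _ => (false : Bool)) (fun b : Bool => if b then 1 else 0)
      (fun _ => rfl) (fun _ => rfl))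
    (dgHom (fun _ : PUnit => false) (fun _ => true)
      (fun b : Bool => if b then (2 : Fin 3) else 0) (fun _ => 1)
      (fun _ => (true : Bool)) (fun b : Bool => if b then 1 else 2)
      (fun _ => rfl) (fun _ => rfl))

/-- Two arcs are related if they share an endpoint (ignoring directions); chains for this
relation, i.e. its equivalence closure, are the undirected paths between arcs. -/
def undirRel (G : WalkingParallelPairᵒᵖ ⥤ Type) : arcs G → arcs G → Prop :=
  fun f g => srcMap G f = srcMap G g ∨ srcMap G f = tgtMap G g ∨
    tgtMap G f = srcMap G g ∨ tgtMap G f = tgtMap G g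

section TypeValued

universe u

variable {J : Type u} [SmallCategory J] {K : Type*} [Category K]

lemma CategoryTheory.Functor.CoconeTypes.ι_eq_of_colimit_ι_app_eq {F : J ⥤ K ⥤ Type u} {k : K}
    (c : (F ⋙ (evaluation K (Type u)).obj k).CoconeTypes) {j j' : J}
    {x : (F.obj j).obj k} {y : (F.obj j').obj k}
    (h : (colimit.ι F j).app k x = (colimit.ι F j').app k y) : c.ι j x = c.ι j' y := by
  have hev := congrArg (colimitObjIsoColimitCompEvaluation F k).hom h
  simp only [← ConcreteCategory.comp_apply, colimitObjIsoColimitCompEvaluation_ι_app_hom] at hev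
  have hquot := congrArg (Types.colimitEquivColimitType _) hev
  rw [Types.colimitEquivColimitType_apply, Types.colimitEquivColimitType_apply] at hquot
  exact congrArg (Functor.descColimitType _ c) hquot

lemma CategoryTheory.Limits.exists_limit_π_app_eq {F : J ⥤ K ⥤ Type u} {k : K}
    (s : (F ⋙ (evaluation K (Type u)).obj k).sections) :
    ∃ p : (limit F).obj k, ∀ j, (limit.π F j).app k p = s.val j := by
  refine ⟨(limitObjIsoLimitCompEvaluation F k).inv ((Types.limitEquivSections _).symm s),
    fun j => ?_⟩
  rw [← ConcreteCategory.comp_apply, limitObjIsoLimitCompEvaluation_inv_π_app,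
    Types.limitEquivSections_symm_apply]

end TypeValued

section Interface

variable {C : Type} [SmallCategory C] {D : Type w} [Category.{v} D]

lemma interfaceπ_comp_map (M : C ⥤ D) [∀ c : C, HasLimitsOfShape (Over c) D] {c' c : C}
    (f : c' ⟶ c) : interfaceπ M f ≫ M.map f = interfaceπ M (𝟙 c) :=
  limit.w (overDiagram M c) (Over.homMk f : Over.mk f ⟶ Over.mk (𝟙 c))

lemma interfaceTrans_eq_interfaceπ_comp_tensorι (M : C ⥤ D) (G : Cᵒᵖ ⥤ Type)
    [HasColimitsOfShape G.Elementsᵒᵖ D] [∀ c : C, HasLimitsOfShape (Over c) D]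
    {c' c : C} (f : c' ⟶ c) (x : G.obj (op c)) :
    interfaceTrans M G c x = interfaceπ M f ≫ tensorι M G c' (G.map f.op x) := by
  rw [interfaceTrans, ← interfaceπ_comp_map M f, Category.assoc]
  congr 1
  exact colimit.w (elemDiagram M G)
    (CategoryOfElements.homMk ⟨op c, x⟩ ⟨op c', G.map f.op x⟩ f.op rfl).op

end Interface

def IsEndpoint (G : WalkingParallelPairᵒᵖ ⥤ Type) (n : nodes G) (e : arcs G) : Prop :=
  srcMap G e = n ∨ tgtMap G e = n

lemma undirRel_iff_exists_isEndpoint (G : WalkingParallelPairᵒᵖ ⥤ Type) (e e' : arcs G) :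
    undirRel G e e' ↔ ∃ n, IsEndpoint G n e ∧ IsEndpoint G n e' := by
  constructor
  · rintro (h | h | h | h)
    exacts [⟨_, .inl rfl, .inl h.symm⟩, ⟨_, .inl rfl, .inr h.symm⟩, ⟨_, .inr rfl, .inl h.symm⟩,
      ⟨_, .inr rfl, .inr h.symm⟩]
  · rintro ⟨n, rfl | rfl, h | h⟩
    exacts [.inl h.symm, .inr (.inl h.symm), .inr (.inr (.inl h.symm)), .inr (.inr (.inr h.symm))]

lemma isEndpoint_srcMap (G : WalkingParallelPairᵒᵖ ⥤ Type) (e : arcs G) :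
    IsEndpoint G (srcMap G e) e := .inl rfl

lemma isEndpoint_tgtMap (G : WalkingParallelPairᵒᵖ ⥤ Type) (e : arcs G) :
    IsEndpoint G (tgtMap G e) e := .inr rfl

lemma interfaceπ_Mu_app_eq_true (p : (interfaceObj Mu one).obj (op zero)) :
    (interfaceπ Mu left).app (op zero) p = true ∧
      (interfaceπ Mu right).app (op zero) p = true := by
  have h := ConcreteCategory.congr_hom (NatTrans.congr_app
    ((interfaceπ_comp_map Mu left).trans (interfaceπ_comp_map Mu right).symm) (op zero)) p
  simp only [NatTrans.comp_app, ConcreteCategory.comp_apply] at h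
  suffices ∀ b b' : Bool, ((if b then (1 : Fin 3) else 0) = if b' then 1 else 2) → b ∧ b' from
    this _ _ h
  decide

lemma interfaceπ_Mu_left_eq_right : interfaceπ Mu left = interfaceπ Mu right := by
  ext k p
  match k with
  | op zero =>
    obtain ⟨hl, hr⟩ := interfaceπ_Mu_app_eq_true p
    exact hl.trans hr.symm
  | op one => exact Subsingleton.elim (α := PUnit) _ _

lemma interfaceTrans_Mu_eq_of_isEndpoint (G : WalkingParallelPairᵒᵖ ⥤ Type) {x : arcs G}
    {n : nodes G} (h : IsEndpoint G n x) :
    interfaceTrans Mu G one x = interfaceπ Mu left ≫ tensorι Mu G zero n := by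
  rcases h with rfl | rfl
  · exact interfaceTrans_eq_interfaceπ_comp_tensorι Mu G left x
  · rw [interfaceπ_Mu_left_eq_right]
    exact interfaceTrans_eq_interfaceπ_comp_tensorι Mu G right x

def muApex : ∀ c : WalkingParallelPair, (Mu.obj c).obj (op zero)
  | zero => (true : Bool)
  | one => (1 : Fin 3)

lemma muApex_map {c c' : WalkingParallelPair} (f : c ⟶ c') :
    (Mu.map f).app (op zero) (muApex c) = muApex c' := by
  cases f using WalkingParallelPairHom.casesOn
  · rfl
  · rfl
  · rw [walkingParallelPairHom_id, CategoryTheory.Functor.map_id]; rfl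

lemma exists_interfaceπ_id_app_eq_muApex :
    ∃ p : (interfaceObj Mu one).obj (op zero),
      (interfaceπ Mu (𝟙 one)).app (op zero) p = muApex one :=
  let s : (overDiagram Mu one ⋙ (evaluation _ Type).obj (op zero)).sections :=
    ⟨fun j => muApex j.left, fun f => muApex_map f.left⟩
  (exists_limit_π_app_eq s).imp fun _ hp => hp (Over.mk (𝟙 one))

section Components

variable (G : WalkingParallelPairᵒᵖ ⥤ Type)

def arcComponent (e : arcs G) : Set (arcs G) :=
  {z | Relation.EqvGen (undirRel G) e z}

def nodeComponent (n : nodes G) : Set (arcs G) :=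
  {z | ∃ e, IsEndpoint G n e ∧ Relation.EqvGen (undirRel G) e z}

variable {G}

lemma nodeComponent_eq_arcComponent {n : nodes G} {e : arcs G} (h : IsEndpoint G n e) :
    nodeComponent G n = arcComponent G e := by
  ext z
  constructor
  · rintro ⟨e', he', hz⟩
    exact .trans _ _ _ (.rel _ _ ((undirRel_iff_exists_isEndpoint G e e').2 ⟨n, h, he'⟩)) hz
  · exact fun hz => ⟨e, h, hz⟩

variable (G)

def componentLabel :
    ∀ c : WalkingParallelPair, G.obj (op c) → (Mu.obj c).obj (op zero) → Set (arcs G)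
  | zero, n => fun b : Bool => if b then nodeComponent G n else ∅
  | one, e => fun v : Fin 3 => if v = 1 then arcComponent G e else ∅

lemma componentLabel_map {c c' : WalkingParallelPair} (f : c ⟶ c') (e : G.obj (op c'))
    (v : (Mu.obj c).obj (op zero)) :
    componentLabel G c' e ((Mu.map f).app (op zero) v) =
      componentLabel G c (G.map f.op e) v := by
  cases f using WalkingParallelPairHom.casesOn
  · cases v
    · rfl
    · exact (nodeComponent_eq_arcComponent (isEndpoint_srcMap G e)).symm
  · cases v
    · rfl
    · exact (nodeComponent_eq_arcComponent (isEndpoint_tgtMap G e)).symm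
  · rw [walkingParallelPairHom_id, CategoryTheory.Functor.map_id, op_id,
      CategoryTheory.Functor.map_id]
    rfl

def componentCocone : (elemDiagram Mu G ⋙ (evaluation _ Type).obj (op zero)).CoconeTypes where
  pt := Set (arcs G)
  ι j := componentLabel G j.unop.1.unop j.unop.2
  ι_naturality f := by
    funext v
    rw [← f.unop.2]
    exact componentLabel_map G f.unop.1.unop _ v

end Components

lemma eqvGen_of_tensorι_app_muApex_eq (G : WalkingParallelPairᵒᵖ ⥤ Type) {x y : arcs G}
    (h : (tensorι Mu G one x).app (op zero) (muApex one) =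
      (tensorι Mu G one y).app (op zero) (muApex one)) :
    Relation.EqvGen (undirRel G) x y := by
  have hxy : arcComponent G x = arcComponent G y :=
    (componentCocone G).ι_eq_of_colimit_ι_app_eq h
  change y ∈ arcComponent G x
  rw [hxy]
  exact .refl y

/-- For a directed graph `G` and the representation `M_u`
(`M_u(0) = (p₀ → p₁)`, `M_u(1) = (q₀ → q₁ ← q₂)`), two arcs `x, y` have the same image under
the interface transformation `φ₁^{M_u,G}` iff there is an undirected path between them,
i.e. they lie in the same weakly connected component. -/
theorem statement9 (G : WalkingParallelPairᵒᵖ ⥤ Type) (x y : arcs G) :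
    interfaceTrans Mu G one x = interfaceTrans Mu G one y ↔
      Relation.EqvGen (undirRel G) x y := by
  constructor
  · intro h
    obtain ⟨p, hp⟩ := exists_interfaceπ_id_app_eq_muApex
    have hxy := ConcreteCategory.congr_hom (NatTrans.congr_app h (op zero)) p
    simp only [interfaceTrans, NatTrans.comp_app, ConcreteCategory.comp_apply, hp] at hxy
    exact eqvGen_of_tensorι_app_muApex_eq G hxy
  · intro h
    refine Setoid.eqvGen_le (s := Setoid.ker (interfaceTrans Mu G one)) (fun a b hab => ?_) h
    obtain ⟨n, ha, hb⟩ := (undirRel_iff_exists_isEndpoint G a b).1 hab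
    exact (interfaceTrans_Mu_eq_of_isEndpoint G ha).trans
      (interfaceTrans_Mu_eq_of_isEndpoint G hb).symm
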